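/- Let X be a Type I space such that the poset of closed unbounded subsets of X ordered by inclusion is downward countably closed (every decreasing ω-sequence of clubs has a club lower bound). If X contains no direction, then every closed unbounded subset C of X admits a family (C_t)_{t ∈ 2^{<ω₁}} of closed unbounded subsets of C with C_∅ = C, C_t ⊆ C_s whenever t ⊇ s, and C_t ∩ C_s = ∅ whenever s, t are incomparable in 2^{<ω₁}. -/

import Mathlib

open Set Topology

noncomputable section

universe u

/-- The ordinal ω₁. -/
def omega1 : Ordinal.{0} := (Cardinal.aleph 1).ord

theorem omega1_pos : (0 : Ordinal.{0}) < omega1 := by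
  have := Cardinal.ord_lt_ord.mpr (Cardinal.aleph_pos 1)
  simpa [omega1, Cardinal.ord_zero] using this

theorem omega1_isLimit : Order.IsSuccLimit omega1 := by
  first
  | exact Cardinal.isSuccLimit_ord (Cardinal.aleph0_le_aleph 1)
  | exact Ordinal.isSuccLimit_ord (Cardinal.aleph0_le_aleph 1)

/-- ω₁ as a type (the set of countable ordinals). -/
def W : Type 1 := {a : Ordinal.{0} // a < omega1}

instance : LinearOrder W := by unfold W; infer_instance
instance : TopologicalSpace W := Preorder.topology W
instance : OrderTopology W := ⟨rfl⟩

def w0 : W := ⟨0, omega1_pos⟩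
def Wsucc (a : W) : W := ⟨Order.succ a.1, omega1_isLimit.succ_lt a.2⟩

/-- The closed long ray: ω₁ × [0,1) with the lexicographic order topology. -/
def LongRay : Type 1 := W ×ₗ ↥(Set.Ico (0:ℝ) 1)

instance : LinearOrder LongRay := by unfold LongRay; infer_instance
instance : TopologicalSpace LongRay := Preorder.topology LongRay
instance : OrderTopology LongRay := ⟨rfl⟩

/-- Embedding of ω₁ into the long ray as the points (α, 0). -/
def iW (a : W) : LongRay := toLex (a, ⟨0, le_rfl, one_pos⟩)
def lrZero : LongRay := iW w0

/-- A subset of ω₁ is unbounded. -/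
def WUnbounded (S : Set W) : Prop := ∀ a : W, ∃ b ∈ S, a < b
/-- A subset of ω₁ is closed (in the order sense). -/
def WClosed (S : Set W) : Prop :=
  ∀ a : W, (∃ b, b < a) → (∀ b, b < a → ∃ c ∈ S, b < c ∧ c < a) → a ∈ S
def WClub (S : Set W) : Prop := WClosed S ∧ WUnbounded S
def WStationary (A : Set W) : Prop := ∀ C : Set W, WClub C → (A ∩ C).Nonempty

/-- A Type I space structure on `X`. -/
structure TypeI (X : Type u) [TopologicalSpace X] where
  seq : W → Set X
  isOpen : ∀ a, IsOpen (seq a)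
  lindelof : ∀ a, IsLindelof (closure (seq a))
  mono : ∀ a b : W, a < b → closure (seq a) ⊆ seq b
  covers : ∀ x : X, ∃ a, x ∈ seq a

variable {X : Type u} [TopologicalSpace X]

/-- A subset is bounded if contained in some `X_α`. -/
def TypeI.Bdd (hT : TypeI X) (A : Set X) : Prop := ∃ a, A ⊆ hT.seq a
/-- Club: closed and unbounded. -/
def TypeI.Club (hT : TypeI X) (A : Set X) : Prop := IsClosed A ∧ ¬ hT.Bdd A
/-- A predirection: an unbounded set such that any function unbounded on it is
unbounded on every unbounded subset of it. -/
def TypeI.Predirection (hT : TypeI X) (D : Set X) : Prop :=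
  ¬ hT.Bdd D ∧ ∀ f : X → LongRay, Continuous f → ¬ BddAbove (f '' D) →
    ∀ A ⊆ D, ¬ hT.Bdd A → ¬ BddAbove (f '' A)
/-- A direction: a closed predirection. -/
def TypeI.IsDirection (hT : TypeI X) (D : Set X) : Prop := IsClosed D ∧ hT.Predirection D
/-- The bones. -/
def TypeI.bone (hT : TypeI X) (a : W) : Set X := closure (hT.seq a) \ hT.seq a
/-- The sequence is canonical. -/
def TypeI.Canonical (hT : TypeI X) : Prop :=
  ∀ a : W, Order.IsSuccLimit a.1 → hT.seq a = ⋃ b ∈ {b : W | b < a}, hT.seq b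
/-- A slicer. -/
def TypeI.Slicer (hT : TypeI X) (s : X → LongRay) : Prop :=
  Continuous s ∧ ∀ a : W, ∀ x ∈ closure (hT.seq (Wsucc a)) \ hT.seq a,
    s x ∈ Set.Icc (iW a) (iW (Wsucc a))

/-- ω-bounded: closures of countable sets are compact. -/
def OmegaBounded (X : Type u) [TopologicalSpace X] : Prop :=
  ∀ S : Set X, S.Countable → IsCompact (closure S)
/-- ω₁-compact: no uncountable closed discrete subset. -/
def Omega1Compact (X : Type u) [TopologicalSpace X] : Prop :=
  ∀ C : Set X, IsClosed C → DiscreteTopology C → C.Countable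
/-- Countably tight. -/
def CountablyTight (X : Type u) [TopologicalSpace X] : Prop :=
  ∀ (A : Set X) (x : X), x ∈ closure A → ∃ B ⊆ A, B.Countable ∧ x ∈ closure B

theorem W_lt_iff (a b : W) : a < b ↔ a.1 < b.1 := Iff.rfl
theorem W_le_iff (a b : W) : a ≤ b ↔ a.1 ≤ b.1 := Iff.rfl

theorem W_countable_bdd (t : Set W) (ht : t.Countable) : ∃ b : W, ∀ a ∈ t, a < b := by
  rcases t.eq_empty_or_nonempty with rfl | hne
  · exact ⟨w0, by simp⟩
  obtain ⟨e, rfl⟩ := Set.Countable.exists_eq_range ht hne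
  have hcof : (Cardinal.mk ℕ) < omega1.cof := by
    rw [show omega1.cof = Cardinal.aleph 1 from Cardinal.isRegular_aleph_one.cof_eq]
    simpa using Cardinal.aleph0_lt_aleph_one
  have hlt : ∀ i : ℕ, (e i).1 + 1 < omega1 := fun i =>
    omega1_isLimit.succ_lt (e i).2 |>.trans_eq' (by rw [Ordinal.add_one_eq_succ])
  have hsup := Ordinal.iSup_lt_ord hcof (f := fun i => (e i).1 + 1) hlt
  refine ⟨⟨_, hsup⟩, ?_⟩
  rintro a ⟨i, rfl⟩
  refine (W_lt_iff _ _).mpr ?_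
  exact lt_of_lt_of_le (Order.lt_succ _ |>.trans_eq (Ordinal.add_one_eq_succ _).symm)
    (le_ciSup (Ordinal.bddAbove_range _) i)

theorem longRay_lt_iff (a b : W × ↥(Set.Ico (0:ℝ) 1)) :
    (toLex a : LongRay) < toLex b ↔ a.1 < b.1 ∨ a.1 = b.1 ∧ a.2 < b.2 := Prod.Lex.lt_iff

theorem longRay_le_iff (a b : W × ↥(Set.Ico (0:ℝ) 1)) :
    (toLex a : LongRay) ≤ toLex b ↔ a.1 < b.1 ∨ a.1 = b.1 ∧ a.2 ≤ b.2 := Prod.Lex.le_iff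

theorem lt_iW_succ (x : LongRay) : x < iW (Wsucc (ofLex x).1) := by
  refine (longRay_lt_iff (ofLex x) _).mpr (Or.inl ?_)
  rw [W_lt_iff]
  exact Order.lt_succ _

theorem longRay_lindelof_bddAbove (S : Set LongRay) (h : IsLindelof S) : BddAbove S := by
  have hcov : S ⊆ ⋃ a : W, Set.Iio (iW (Wsucc a)) := fun x _ =>
    Set.mem_iUnion.mpr ⟨(ofLex x).1, lt_iW_succ x⟩
  obtain ⟨t, htc, hts⟩ := h.elim_countable_subcover _ (fun a => isOpen_Iio) hcov
  obtain ⟨b, hb⟩ := W_countable_bdd ((fun a => Wsucc a) '' t) (htc.image _)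
  refine ⟨iW b, fun x hx => ?_⟩
  obtain ⟨a, hat, hxa⟩ := Set.mem_iUnion₂.mp (hts hx)
  exact le_of_lt (lt_of_lt_of_le hxa (by
    have := hb _ ⟨a, hat, rfl⟩
    exact le_of_lt ((longRay_lt_iff _ _).mpr (Or.inl this))))

theorem TypeI.Bdd.mono {X : Type u} [TopologicalSpace X] {hT : TypeI X} {A B : Set X}
    (h : hT.Bdd B) (hAB : A ⊆ B) : hT.Bdd A := by
  obtain ⟨a, ha⟩ := h; exact ⟨a, hAB.trans ha⟩

theorem split_exists {X : Type u} [TopologicalSpace X] (hT : TypeI X)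
    (hnodir : ¬ ∃ D : Set X, hT.IsDirection D)
    (D : Set X) (hD : hT.Club D) :
    ∃ A B : Set X, hT.Club A ∧ hT.Club B ∧ A ⊆ D ∧ B ⊆ D ∧ A ∩ B = ∅ := by
  have hpre : ¬ hT.Predirection D := fun hp => hnodir ⟨D, hD.1, hp⟩
  rw [TypeI.Predirection] at hpre
  push_neg at hpre
  obtain ⟨f, hf, hfu, A, hAD, hAub, hAb⟩ := hpre hD.2
  obtain ⟨b, hb⟩ := hAb
  set b' : LongRay := iW (Wsucc (ofLex b).1) with hb'def
  have hbb' : b < b' := lt_iW_succ b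
  refine ⟨closure A ∩ D, D ∩ f ⁻¹' (Set.Ici b'), ⟨isClosed_closure.inter hD.1, ?_⟩,
    ⟨hD.1.inter (isClosed_Ici.preimage hf), ?_⟩, Set.inter_subset_right,
    Set.inter_subset_left, ?_⟩
  · exact fun h => hAub (h.mono (Set.subset_inter subset_closure hAD))
  · rintro ⟨a, ha⟩
    obtain ⟨c, hc⟩ := longRay_lindelof_bddAbove _ ((hT.lindelof a).image hf)
    apply hfu
    refine ⟨max b' c, ?_⟩
    rintro y ⟨x, hxD, rfl⟩
    by_cases hxK : x ∈ closure (hT.seq a)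
    · exact le_max_of_le_right (hc ⟨x, hxK, rfl⟩)
    · have hxB : x ∉ D ∩ f ⁻¹' (Set.Ici b') := fun hxB =>
        hxK (subset_closure (ha hxB))
      have : f x ∉ Set.Ici b' := fun hfx => hxB ⟨hxD, hfx⟩
      exact le_max_of_le_left (le_of_not_ge this)
  · apply Set.eq_empty_of_forall_notMem
    rintro x ⟨⟨hxA, -⟩, -, hfx'⟩
    have hfx : b' ≤ f x := hfx'
    have h1 : f x ≤ b := by
      have := image_closure_subset_closure_image (s := A) hf ⟨x, hxA, rfl⟩
      exact closure_minimal (fun y hy => hb hy) isClosed_Iic this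
    exact absurd (hfx.trans h1) (not_le.mpr hbb')

theorem cofinal_seq {α : Ordinal.{0}} (hα : α < omega1) (hlim : Order.IsSuccLimit α) :
    ∃ ψ : ℕ → Ordinal.{0}, Monotone ψ ∧ (∀ i, ψ i < α) ∧ ∀ β < α, ∃ i, β ≤ ψ i := by
  have hcard : Cardinal.mk (Set.Iio α) ≤ Cardinal.aleph0 := by
    rw [Ordinal.mk_Iio_ordinal]
    have h1 : α.card < Cardinal.aleph 1 := Cardinal.lt_ord.mp hα
    have h2 : α.card ≤ Cardinal.aleph0 := by
      rwa [← Cardinal.succ_aleph0, Order.lt_succ_iff] at h1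
    exact (Cardinal.lift_le.mpr h2).trans_eq Cardinal.lift_aleph0
  have hcnt : (Set.Iio α).Countable := Cardinal.le_aleph0_iff_set_countable.mp hcard
  obtain ⟨e, he⟩ := Set.Countable.exists_eq_range hcnt ⟨0, hlim.pos⟩
  have helt : ∀ i, e i < α := fun i => by
    have : e i ∈ Set.Iio α := he ▸ Set.mem_range_self i
    exact this
  set ψ : ℕ → Ordinal.{0} := fun i => Nat.rec (e 0) (fun n ih => max ih (e (n+1))) i with hψ
  have hmono : Monotone ψ := monotone_nat_of_le_succ (fun n => le_max_left _ _)
  have heψ : ∀ i, e i ≤ ψ i := by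
    rintro (_ | i)
    · exact le_refl _
    · exact le_max_right _ _
  have hψlt : ∀ i, ψ i < α := by
    intro i
    induction i with
    | zero => exact helt 0
    | succ n ih => exact max_lt ih (helt (n+1))
  refine ⟨ψ, hmono, hψlt, fun β hβ => ?_⟩
  have : β ∈ Set.range e := he ▸ hβ
  obtain ⟨i, rfl⟩ := this
  exact ⟨i, heψ i⟩

section Recursion

variable {X : Type u} [TopologicalSpace X]

open Classical in
/-- Split a club into two disjoint clubs, chosen. -/
def spl (hT : TypeI X) (hnodir : ¬ ∃ D : Set X, hT.IsDirection D) (D : Set X) (v : Bool) : Set X :=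
  if h : hT.Club D then
    (if v then (split_exists hT hnodir D h).choose
     else (split_exists hT hnodir D h).choose_spec.choose)
  else ∅

variable {hT : TypeI X} {hnodir : ¬ ∃ D : Set X, hT.IsDirection D}

theorem spl_spec {D : Set X} (h : hT.Club D) (v : Bool) :
    hT.Club (spl hT hnodir D v) ∧ spl hT hnodir D v ⊆ D := by
  obtain ⟨hA, hB, hAD, hBD, -⟩ := (split_exists hT hnodir D h).choose_spec.choose_spec
  rw [spl, dif_pos h]
  cases v
  · exact ⟨hB, hBD⟩
  · exact ⟨hA, hAD⟩

theorem spl_disj {D : Set X} (h : hT.Club D) {v w : Bool} (hvw : v ≠ w) :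
    spl hT hnodir D v ∩ spl hT hnodir D w = ∅ := by
  obtain ⟨-, -, -, -, hd⟩ := (split_exists hT hnodir D h).choose_spec.choose_spec
  rw [spl, spl, dif_pos h, dif_pos h]
  cases v <;> cases w
  · exact absurd rfl hvw
  · show _ ∩ _ = ∅
    rw [Set.inter_comm]; exact hd
  · exact hd
  · exact absurd rfl hvw

open Classical in
/-- Choice of a club lower bound at limit stages. -/
def limChoice (hT : TypeI X) (C : Set X) (α : Ordinal.{0}) (g : Ordinal.{0} → Set X) : Set X :=
  if h : ∃ D, hT.Club D ∧ D ⊆ C ∧ ∀ β < α, D ⊆ g β then h.choose else ∅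

theorem limChoice_spec {C : Set X} {α : Ordinal.{0}} {g : Ordinal.{0} → Set X}
    (h : ∃ D, hT.Club D ∧ D ⊆ C ∧ ∀ β < α, D ⊆ g β) :
    hT.Club (limChoice hT C α g) ∧ limChoice hT C α g ⊆ C ∧
      ∀ β < α, limChoice hT C α g ⊆ g β := by
  rw [limChoice, dif_pos h]; exact h.choose_spec

/-- The recursive family. -/
def Gfam (hT : TypeI X) (hnodir : ¬ ∃ D : Set X, hT.IsDirection D) (C : Set X) (f : W → Bool) (α : Ordinal.{0}) : Set X :=
  Ordinal.limitRecOn α C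
    (fun β ih => if h : β < omega1 then spl hT hnodir ih (f ⟨β, h⟩) else ∅)
    (fun α _ ih => limChoice hT C α (fun β => if h : β < α then ih β h else ∅))

variable {C : Set X}

theorem Gfam_zero (f : W → Bool) : Gfam hT hnodir C f 0 = C :=
  Ordinal.limitRecOn_zero _ _ _

theorem Gfam_succ (f : W → Bool) (β : Ordinal.{0}) :
    Gfam hT hnodir C f (Order.succ β) =
      if h : β < omega1 then spl hT hnodir (Gfam hT hnodir C f β) (f ⟨β, h⟩) else ∅ :=
  Ordinal.limitRecOn_succ _ _ _ _

theorem Gfam_limit (f : W → Bool) {α : Ordinal.{0}} (h : Order.IsSuccLimit α) :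
    Gfam hT hnodir C f α =
      limChoice hT C α (fun β => if _ : β < α then Gfam hT hnodir C f β else ∅) :=
  Ordinal.limitRecOn_limit _ _ _ _ h

end Recursion

section Invariant

variable {X : Type u} [TopologicalSpace X] {hT : TypeI X}
  {hnodir : ¬ ∃ D : Set X, hT.IsDirection D} {C : Set X}

theorem Gfam_ext (f g : W → Bool) :
    ∀ α : Ordinal.{0}, (∀ c : W, c.1 < α → f c = g c) →
      Gfam hT hnodir C f α = Gfam hT hnodir C g α := by
  intro α
  induction α using Ordinal.limitRecOn with
  | zero => intro _; rw [Gfam_zero, Gfam_zero]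
  | add_one β ih =>
      rw [Ordinal.add_one_eq_succ]
      intro hag
      rw [Gfam_succ, Gfam_succ]
      by_cases h : β < omega1
      · rw [dif_pos h, dif_pos h,
          ih (fun c hc => hag c (hc.trans (Order.lt_succ β))),
          hag ⟨β, h⟩ (Order.lt_succ β)]
      · rw [dif_neg h, dif_neg h]
  | limit α hlim ih =>
      intro hag
      rw [Gfam_limit _ hlim, Gfam_limit _ hlim]
      have hfun : (fun β => if _ : β < α then Gfam hT hnodir C f β else ∅)
          = (fun β => if _ : β < α then Gfam hT hnodir C g β else ∅) := by
        funext β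
        by_cases h : β < α
        · rw [dif_pos h, dif_pos h, ih β h (fun c hc => hag c (hc.trans h))]
        · rw [dif_neg h, dif_neg h]
      rw [hfun]

theorem Gfam_inv (hC : hT.Club C)
    (hcc : ∀ Cs : ℕ → Set X, (∀ i, hT.Club (Cs i)) → (∀ i, Cs (i+1) ⊆ Cs i) →
      ∃ D, hT.Club D ∧ ∀ i, D ⊆ Cs i) :
    ∀ α : Ordinal.{0}, α < omega1 → ∀ f : W → Bool,
      hT.Club (Gfam hT hnodir C f α) ∧
        ∀ β ≤ α, Gfam hT hnodir C f α ⊆ Gfam hT hnodir C f β := by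
  intro α
  induction α using Ordinal.limitRecOn with
  | zero =>
      intro _ f
      refine ⟨by rw [Gfam_zero]; exact hC, fun β hβ => ?_⟩
      rw [nonpos_iff_eq_zero.mp hβ]
  | add_one β ih =>
      rw [Ordinal.add_one_eq_succ]
      intro hs f
      have hβ : β < omega1 := (Order.lt_succ β).trans hs
      obtain ⟨hclub, hmono⟩ := ih hβ f
      have hsp := spl_spec (hnodir := hnodir) hclub (f ⟨β, hβ⟩)
      rw [Gfam_succ, dif_pos hβ]
      refine ⟨hsp.1, fun γ hγ => ?_⟩
      rcases eq_or_lt_of_le hγ with rfl | hlt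
      · rw [Gfam_succ, dif_pos hβ]
      · exact hsp.2.trans (hmono γ (Order.lt_succ_iff.mp hlt))
  | limit α hlim ih =>
      intro hα f
      have hex : ∃ D, hT.Club D ∧ D ⊆ C ∧ ∀ β < α,
          D ⊆ (fun β => if _ : β < α then Gfam hT hnodir C f β else ∅) β := by
        obtain ⟨ψ, hψm, hψlt, hψcof⟩ := cofinal_seq hα hlim
        obtain ⟨D, hD, hDi⟩ := hcc (fun i => Gfam hT hnodir C f (ψ i))
          (fun i => (ih (ψ i) (hψlt i) ((hψlt i).trans hα) f).1)
          (fun i => (ih (ψ (i+1)) (hψlt (i+1)) ((hψlt (i+1)).trans hα) f).2 (ψ i)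
            (hψm (Nat.le_succ i)))
        refine ⟨D, hD, ?_, fun β hβ => ?_⟩
        · have := (ih (ψ 0) (hψlt 0) ((hψlt 0).trans hα) f).2 0 (zero_le (a := _))
          rw [Gfam_zero] at this
          exact (hDi 0).trans this
        · simp only [dif_pos hβ]
          obtain ⟨i, hi⟩ := hψcof β hβ
          exact (hDi i).trans ((ih (ψ i) (hψlt i) ((hψlt i).trans hα) f).2 β hi)
      have hspec := limChoice_spec (hT := hT) hex
      rw [Gfam_limit _ hlim]
      refine ⟨hspec.1, fun β hβ => ?_⟩
      rcases eq_or_lt_of_le hβ with rfl | hlt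
      · rw [Gfam_limit _ hlim]
      · have := hspec.2.2 β hlt
        simpa only [dif_pos hlt] using this

end Invariant

/-- If the club poset is downward countably closed and X has no direction,
then every club is 2^{<ω₁}-spiked. Elements of 2^{<ω₁} are encoded as pairs
(length, values), ordered by extension up to the length. -/
theorem stmt_9 {X : Type u} [TopologicalSpace X] [T2Space X] (hT : TypeI X)
    (hcc : ∀ C : ℕ → Set X, (∀ i, hT.Club (C i)) → (∀ i, C (i+1) ⊆ C i) →
      ∃ D, hT.Club D ∧ ∀ i, D ⊆ C i)
    (hnodir : ¬ ∃ D : Set X, hT.IsDirection D)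
    (C : Set X) (hC : hT.Club C) :
    ∃ F : W × (W → Bool) → Set X,
      (∀ t, hT.Club (F t) ∧ F t ⊆ C) ∧
      (∀ f : W → Bool, F (w0, f) = C) ∧
      (∀ s t : W × (W → Bool), s.1 ≤ t.1 → (∀ c < s.1, t.2 c = s.2 c) → F t ⊆ F s) ∧
      (∀ s t : W × (W → Bool),
        ¬ (s.1 ≤ t.1 ∧ ∀ c < s.1, t.2 c = s.2 c) →
        ¬ (t.1 ≤ s.1 ∧ ∀ c < t.1, s.2 c = t.2 c) → F s ∩ F t = ∅) := by
  have hinv := Gfam_inv (hnodir := hnodir) (C := C) hC hcc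
  have key : ∀ (a b : W) (f g : W → Bool), a ≤ b → (∃ c : W, c < a ∧ f c ≠ g c) →
      Gfam hT hnodir C f a.1 ∩ Gfam hT hnodir C g b.1 = ∅ := by
    rintro a b f g hab ⟨c, hc, hfg⟩
    obtain ⟨γ₀, hγ₀T, hmin⟩ := wellFounded_lt.has_min
      {γ : Ordinal.{0} | ∃ h : γ < omega1, (⟨γ, h⟩ : W) < a ∧ f ⟨γ, h⟩ ≠ g ⟨γ, h⟩}
      ⟨c.1, c.2, hc, hfg⟩
    obtain ⟨hγ₀ω, hγ₀a, hγ₀fg⟩ := hγ₀T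
    have hagree : ∀ d : W, d.1 < γ₀ → f d = g d := by
      intro d hd
      by_contra hne
      exact hmin d.1 ⟨d.2, lt_trans ((W_lt_iff d ⟨γ₀, hγ₀ω⟩).mpr hd) hγ₀a, hne⟩ hd
    have hsucc : Order.succ γ₀ ≤ a.1 := Order.succ_le_of_lt ((W_lt_iff _ a).mp hγ₀a)
    have hsω : Order.succ γ₀ < omega1 := lt_of_le_of_lt hsucc a.2
    have hfa : Gfam hT hnodir C f a.1 ⊆ Gfam hT hnodir C f (Order.succ γ₀) :=
      (hinv a.1 a.2 f).2 _ hsucc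
    have hgb : Gfam hT hnodir C g b.1 ⊆ Gfam hT hnodir C g (Order.succ γ₀) :=
      (hinv b.1 b.2 g).2 _ (hsucc.trans ((W_le_iff a b).mp hab))
    have heqc : Gfam hT hnodir C g γ₀ = Gfam hT hnodir C f γ₀ :=
      Gfam_ext g f γ₀ (fun d hd => (hagree d hd).symm)
    have hclub : hT.Club (Gfam hT hnodir C f γ₀) := (hinv γ₀ hγ₀ω f).1
    have hdisj : Gfam hT hnodir C f (Order.succ γ₀) ∩ Gfam hT hnodir C g (Order.succ γ₀) = ∅ := by
      rw [Gfam_succ, Gfam_succ, dif_pos hγ₀ω, dif_pos hγ₀ω, heqc]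
      exact spl_disj (hnodir := hnodir) hclub hγ₀fg
    exact Set.subset_empty_iff.mp
      ((Set.inter_subset_inter hfa hgb).trans hdisj.subset)
  refine ⟨fun t => Gfam hT hnodir C t.2 t.1.1, ?_, ?_, ?_, ?_⟩
  · rintro ⟨a, f⟩
    obtain ⟨h1, h2⟩ := hinv a.1 a.2 f
    refine ⟨h1, ?_⟩
    have := h2 0 (zero_le (a := _))
    rwa [Gfam_zero] at this
  · intro f
    exact Gfam_zero f
  · rintro ⟨a, f⟩ ⟨b, g⟩ hab hag
    have h1 : Gfam hT hnodir C g b.1 ⊆ Gfam hT hnodir C g a.1 :=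
      (hinv b.1 b.2 g).2 a.1 ((W_le_iff a b).mp hab)
    have h2 : Gfam hT hnodir C g a.1 = Gfam hT hnodir C f a.1 :=
      Gfam_ext g f a.1 (fun d hd => hag d ((W_lt_iff d a).mpr hd))
    show Gfam hT hnodir C g b.1 ⊆ Gfam hT hnodir C f a.1
    rw [← h2]; exact h1
  · rintro ⟨a, f⟩ ⟨b, g⟩ h1 h2
    rcases le_total a b with h | h
    · refine key a b f g h ?_
      rw [not_and] at h1
      have h1' := h1 h
      push_neg at h1'
      obtain ⟨c, hca, hne⟩ := h1'
      exact ⟨c, hca, hne.symm⟩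
    · rw [Set.inter_comm]
      refine key b a g f h ?_
      rw [not_and] at h2
      have h2' := h2 h
      push_neg at h2'
      obtain ⟨c, hca, hne⟩ := h2'
      exact ⟨c, hca, hne.symm⟩

end
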